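/- arXiv:1808.09614 — 4 statements merged into one kernel-verified Lean document; each statement's English description precedes it below -/
import Mathlib

section
/- Let N ≥ 2 and let f : ℝ^N \ {0} → ℝ be a smooth function that is homogeneous of degree 0, i.e. f(tx) = f(x) for all t > 0 and x ≠ 0. Then for every x ≠ 0, |x|² Δ(y ↦ |y| ∇f(y))(x) − |x| ∇(y ↦ |y|² Δf(y))(x) = (N−3) |x| ∇f(x) − 2 (x/|x|) |x|² Δf(x), where the Laplacian on the left acts componentwise on the vector field y ↦ |y|∇f(y). -/
open MeasureTheory

/-- The componentwise Laplacian of a map on Euclidean space. -/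
noncomputable def eucLaplacian {N : ℕ} {F : Type*} [NormedAddCommGroup F] [NormedSpace ℝ F]
    (u : EuclideanSpace ℝ (Fin N) → F) (x : EuclideanSpace ℝ (Fin N)) : F :=
  ∑ i, fderiv ℝ (fun y => fderiv ℝ u y (EuclideanSpace.single i 1)) x
    (EuclideanSpace.single i 1)

open Filter Topology

namespace LapAux

variable {N : ℕ}

/-- partial derivative in direction `i`. -/
noncomputable def sD (i : Fin N) (u : EuclideanSpace ℝ (Fin N) → ℝ)
    (y : EuclideanSpace ℝ (Fin N)) : ℝ :=
  fderiv ℝ u y (EuclideanSpace.single i 1)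

theorem eucLap_eq (u : EuclideanSpace ℝ (Fin N) → ℝ) (x : EuclideanSpace ℝ (Fin N)) :
    eucLaplacian u x = ∑ i, sD i (sD i u) x := rfl

theorem contDiffAt_sD {n m : WithTop ℕ∞} {u : EuclideanSpace ℝ (Fin N) → ℝ}
    {y : EuclideanSpace ℝ (Fin N)} (h : ContDiffAt ℝ n u y) (hmn : m + 1 ≤ n) (i : Fin N) :
    ContDiffAt ℝ m (sD i u) y := by
  have h1 := h.fderiv_right hmn
  exact (ContinuousLinearMap.apply ℝ ℝ (EuclideanSpace.single i 1)).contDiff.contDiffAt.comp y h1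

theorem fderiv_sD_eq {u : EuclideanSpace ℝ (Fin N) → ℝ} {y : EuclideanSpace ℝ (Fin N)}
    (hu : DifferentiableAt ℝ (fderiv ℝ u) y) (i : Fin N) (w : EuclideanSpace ℝ (Fin N)) :
    fderiv ℝ (sD i u) y w = fderiv ℝ (fderiv ℝ u) y w (EuclideanSpace.single i 1) := by
  have h := ((ContinuousLinearMap.apply ℝ ℝ
      (EuclideanSpace.single i (1:ℝ))).hasFDerivAt.comp y hu.hasFDerivAt)
  have : fderiv ℝ (sD i u) y = (ContinuousLinearMap.apply ℝ ℝ
      (EuclideanSpace.single i (1:ℝ))).comp (fderiv ℝ (fderiv ℝ u) y) := h.fderiv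
  rw [this]; rfl

theorem sD_comm {u : EuclideanSpace ℝ (Fin N) → ℝ} {y : EuclideanSpace ℝ (Fin N)}
    (h : ContDiffAt ℝ 2 u y) (i j : Fin N) :
    sD i (sD j u) y = sD j (sD i u) y := by
  have hd : DifferentiableAt ℝ (fderiv ℝ u) y :=
    (h.fderiv_right (m := 1) (by norm_num)).differentiableAt one_ne_zero
  have hs := h.isSymmSndFDerivAt (by norm_num)
  show fderiv ℝ (sD j u) y (EuclideanSpace.single i 1)
      = fderiv ℝ (sD i u) y (EuclideanSpace.single j 1)
  rw [fderiv_sD_eq hd, fderiv_sD_eq hd]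
  exact hs _ _

theorem gradient_component (u : EuclideanSpace ℝ (Fin N) → ℝ) (y : EuclideanSpace ℝ (Fin N))
    (j : Fin N) : gradient u y j = sD j u y := by
  have : fderiv ℝ u y = InnerProductSpace.toDual ℝ _ (gradient u y) := by
    rw [gradient, (InnerProductSpace.toDual ℝ _).apply_symm_apply]
  show _ = fderiv ℝ u y (EuclideanSpace.single j 1)
  rw [this, InnerProductSpace.toDual_apply_apply, EuclideanSpace.inner_single_right]
  simp

theorem norm_hasFDerivAt {x : EuclideanSpace ℝ (Fin N)} (hx : x ≠ 0) :
    HasFDerivAt (fun y : EuclideanSpace ℝ (Fin N) => ‖y‖) (‖x‖⁻¹ • innerSL ℝ x) x := by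
  have h2 : HasFDerivAt (fun y : EuclideanSpace ℝ (Fin N) => ‖y‖ ^ 2)
      (2 • innerSL ℝ x) x := by
    simpa using (hasFDerivAt_id x).norm_sq
  have hs : HasDerivAt Real.sqrt (1 / (2 * Real.sqrt (‖x‖ ^ 2))) (‖x‖ ^ 2) :=
    Real.hasDerivAt_sqrt (by have := norm_pos_iff.mpr hx; positivity)
  have h3 := hs.comp_hasFDerivAt x h2
  rw [show (Real.sqrt ∘ fun y : EuclideanSpace ℝ (Fin N) => ‖y‖ ^ 2) = fun y => ‖y‖ from by
    funext y; simp [Function.comp, Real.sqrt_sq (norm_nonneg y)]] at h3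
  refine h3.congr_fderiv ?_
  rw [Real.sqrt_sq (norm_nonneg x)]
  ext v
  simp [ContinuousLinearMap.smul_apply, smul_smul]
  ring

theorem sD_norm {x : EuclideanSpace ℝ (Fin N)} (hx : x ≠ 0) (i : Fin N) :
    sD i (fun y => ‖y‖) x = ‖x‖⁻¹ * x i := by
  show fderiv ℝ _ x _ = _
  rw [(norm_hasFDerivAt hx).fderiv]
  simp [EuclideanSpace.inner_single_right]

theorem sD_sD_norm {x : EuclideanSpace ℝ (Fin N)} (hx : x ≠ 0) (i : Fin N) :
    sD i (sD i (fun y => ‖y‖)) x = ‖x‖⁻¹ - x i * x i * (‖x‖ ^ 2)⁻¹ * ‖x‖⁻¹ := by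
  have heq : sD i (fun y : EuclideanSpace ℝ (Fin N) => ‖y‖)
      =ᶠ[𝓝 x] fun y => ‖y‖⁻¹ * y i := by
    filter_upwards [isOpen_compl_singleton.mem_nhds (by simpa using hx)] with y hy
    have hy' : y ≠ 0 := by simpa using hy
    exact sD_norm hy' i
  have h1 : HasFDerivAt (fun y : EuclideanSpace ℝ (Fin N) => ‖y‖⁻¹)
      ((-(‖x‖ ^ 2)⁻¹ : ℝ) • (‖x‖⁻¹ • innerSL ℝ x)) x :=
    (hasDerivAt_inv (norm_ne_zero_iff.mpr hx)).comp_hasFDerivAt x (norm_hasFDerivAt hx)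
  have h2 : HasFDerivAt (fun y : EuclideanSpace ℝ (Fin N) => y i)
      (EuclideanSpace.proj (𝕜 := ℝ) i) x := by
    exact (EuclideanSpace.proj (𝕜 := ℝ) (i : Fin N)).hasFDerivAt
  have h3 := h1.mul h2
  show fderiv ℝ _ x _ = _
  rw [heq.fderiv_eq, show (fun y : EuclideanSpace ℝ (Fin N) => ‖y‖⁻¹ * y i) = (fun y => ‖y‖⁻¹) * (fun y => y i) from rfl, h3.fderiv]
  simp [EuclideanSpace.inner_single_right]
  ring

theorem lap_norm {x : EuclideanSpace ℝ (Fin N)} (hx : x ≠ 0) :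
    ∑ i, sD i (sD i (fun y => ‖y‖)) x = ((N : ℝ) - 1) * ‖x‖⁻¹ := by
  have hsum : ∑ i, x i * x i = ‖x‖ ^ 2 := by
    rw [← real_inner_self_eq_norm_sq]
    simp only [PiLp.inner_apply, RCLike.inner_apply, conj_trivial]
  have hx' : ‖x‖ ≠ 0 := norm_ne_zero_iff.mpr hx
  calc ∑ i, sD i (sD i (fun y => ‖y‖)) x
      = ∑ i : Fin N, (‖x‖⁻¹ - x i * x i * (‖x‖ ^ 2)⁻¹ * ‖x‖⁻¹) :=
        Finset.sum_congr rfl fun i _ => sD_sD_norm hx i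
    _ = (N : ℝ) * ‖x‖⁻¹ - (∑ i, x i * x i) * (‖x‖ ^ 2)⁻¹ * ‖x‖⁻¹ := by
        rw [Finset.sum_sub_distrib]
        simp [Finset.sum_mul]
    _ = ((N : ℝ) - 1) * ‖x‖⁻¹ := by
        rw [hsum]
        field_simp

theorem euler_deg_neg_one {v : EuclideanSpace ℝ (Fin N) → ℝ} {x : EuclideanSpace ℝ (Fin N)}
    (hv : ∀ t : ℝ, 0 < t → v (t • x) = t⁻¹ * v x) (hd : DifferentiableAt ℝ v x) :
    fderiv ℝ v x x = - v x := by
  have h1 : HasDerivAt (fun t : ℝ => t • x) x 1 := by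
    simpa using (hasDerivAt_id (1:ℝ)).smul_const x
  have hd' : HasFDerivAt v (fderiv ℝ v x) ((1:ℝ) • x) := by
    rw [one_smul]; exact hd.hasFDerivAt
  have hφ : HasDerivAt (fun t : ℝ => v (t • x)) (fderiv ℝ v x x) 1 := by
    exact hd'.comp_hasDerivAt 1 h1
  have hψ : HasDerivAt (fun t : ℝ => t⁻¹ * v x) (-(v x)) 1 := by
    simpa using (hasDerivAt_inv one_ne_zero).mul_const (v x)
  have heq : (fun t : ℝ => v (t • x)) =ᶠ[𝓝 (1:ℝ)] (fun t : ℝ => t⁻¹ * v x) := by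
    filter_upwards [isOpen_Ioi.mem_nhds (show (1:ℝ) ∈ Set.Ioi 0 by norm_num)] with t ht
    exact hv t ht
  exact hφ.unique (hψ.congr_of_eventuallyEq heq)

theorem clm_apply_eq_sum (T : EuclideanSpace ℝ (Fin N) →L[ℝ] ℝ) (x : EuclideanSpace ℝ (Fin N)) :
    T x = ∑ i, x i * T (EuclideanSpace.single i 1) := by
  have hx : ∑ i, x i • EuclideanSpace.single i (1:ℝ) = x := by
    have := (EuclideanSpace.basisFun (Fin N) ℝ).sum_repr x
    simpa [EuclideanSpace.basisFun_apply, EuclideanSpace.basisFun_repr] using this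
  conv_lhs => rw [← hx]
  rw [map_sum]
  simp [smul_eq_mul]

theorem contDiffAt_DV {F : Type*} [NormedAddCommGroup F] [NormedSpace ℝ F]
    {n m : WithTop ℕ∞} {u : EuclideanSpace ℝ (Fin N) → F} {y : EuclideanSpace ℝ (Fin N)}
    (h : ContDiffAt ℝ n u y) (hmn : m + 1 ≤ n) (w : EuclideanSpace ℝ (Fin N)) :
    ContDiffAt ℝ m (fun z => fderiv ℝ u z w) y :=
  (ContinuousLinearMap.apply ℝ F w).contDiff.contDiffAt.comp y (h.fderiv_right hmn)

theorem eucLaplacian_component {u : EuclideanSpace ℝ (Fin N) → EuclideanSpace ℝ (Fin N)}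
    {x : EuclideanSpace ℝ (Fin N)}
    (hu : ∀ᶠ y in 𝓝 x, DifferentiableAt ℝ u y)
    (hu2 : ∀ i : Fin N, DifferentiableAt ℝ
      (fun y => fderiv ℝ u y (EuclideanSpace.single i 1)) x)
    (j : Fin N) :
    eucLaplacian u x j = eucLaplacian (fun y => u y j) x := by
  have hproj : ∀ (y : EuclideanSpace ℝ (Fin N)), DifferentiableAt ℝ u y →
      ∀ w, fderiv ℝ u y w j = fderiv ℝ (fun z => u z j) y w := by
    intro y hy w
    have h := ((EuclideanSpace.proj (𝕜 := ℝ) j).hasFDerivAt.comp y hy.hasFDerivAt).fderiv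
    have : fderiv ℝ (fun z => u z j) y
        = (EuclideanSpace.proj (𝕜 := ℝ) j).comp (fderiv ℝ u y) := h
    rw [this]; rfl
  have hsum : eucLaplacian u x j
      = ∑ i, (fderiv ℝ (fun y => fderiv ℝ u y (EuclideanSpace.single i 1)) x
          (EuclideanSpace.single i 1)) j := by
    show (EuclideanSpace.proj (𝕜 := ℝ) j) (eucLaplacian u x) = _
    rw [eucLaplacian, map_sum]
    rfl
  rw [hsum, eucLaplacian]
  refine Finset.sum_congr rfl fun i _ => ?_
  have h1 : (fderiv ℝ (fun y => fderiv ℝ u y (EuclideanSpace.single i 1)) x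
      (EuclideanSpace.single i 1)) j
      = fderiv ℝ (fun y => (fderiv ℝ u y (EuclideanSpace.single i 1)) j) x
        (EuclideanSpace.single i 1) := by
    have h := ((EuclideanSpace.proj (𝕜 := ℝ) j).hasFDerivAt.comp x (hu2 i).hasFDerivAt).fderiv
    have h' : fderiv ℝ (fun y => (fderiv ℝ u y (EuclideanSpace.single i 1)) j) x
        = (EuclideanSpace.proj (𝕜 := ℝ) j).comp
          (fderiv ℝ (fun y => fderiv ℝ u y (EuclideanSpace.single i 1)) x) := h
    rw [h']; rfl
  rw [h1]
  have heq : (fun y => (fderiv ℝ u y (EuclideanSpace.single i 1)) j)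
      =ᶠ[𝓝 x] fun y => fderiv ℝ (fun z => u z j) y (EuclideanSpace.single i 1) := by
    filter_upwards [hu] with y hy
    exact hproj y hy _
  rw [heq.fderiv_eq]

end LapAux

open LapAux

theorem laplacian_spherical_gradient_commutator (N : ℕ) (hN : 2 ≤ N)
    (f : EuclideanSpace ℝ (Fin N) → ℝ)
    (hf : ContDiffOn ℝ (⊤ : ℕ∞) f {(0 : EuclideanSpace ℝ (Fin N))}ᶜ)
    (hhom : ∀ t : ℝ, 0 < t → ∀ x : EuclideanSpace ℝ (Fin N), x ≠ 0 → f (t • x) = f x) :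
    ∀ x : EuclideanSpace ℝ (Fin N), x ≠ 0 →
      ‖x‖ ^ 2 • eucLaplacian (fun y => ‖y‖ • gradient f y) x
          - ‖x‖ • gradient (fun y => ‖y‖ ^ 2 * eucLaplacian f y) x =
        ((N : ℝ) - 3) • (‖x‖ • gradient f x)
          - (2 * (‖x‖ ^ 2 * eucLaplacian f x)) • (‖x‖⁻¹ • x) := by
  intro x hx
  have hxmem : {(0 : EuclideanSpace ℝ (Fin N))}ᶜ ∈ 𝓝 x :=
    isOpen_compl_singleton.mem_nhds (by simpa using hx)
  have hxne : ‖x‖ ≠ 0 := norm_ne_zero_iff.mpr hx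
  -- smoothness of f at every nonzero point
  have smoothf : ∀ (y : EuclideanSpace ℝ (Fin N)), y ≠ 0 → ∀ n : ℕ,
      ContDiffAt ℝ n f y := fun y hy n =>
    (hf.contDiffAt (isOpen_compl_singleton.mem_nhds (by simpa using hy))).of_le (by exact_mod_cast le_top)
  have hsDf : ∀ (i : Fin N) (y : EuclideanSpace ℝ (Fin N)), y ≠ 0 → ∀ n : ℕ,
      ContDiffAt ℝ n (sD i f) y := fun i y hy n =>
    contDiffAt_sD (smoothf y hy (n+1)) (by norm_cast) i
  have hsD2 : ∀ (i j : Fin N) (y : EuclideanSpace ℝ (Fin N)), y ≠ 0 → ∀ n : ℕ,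
      ContDiffAt ℝ n (sD i (sD j f)) y := fun i j y hy n =>
    contDiffAt_sD (hsDf j y hy (n+1)) (by norm_cast) i
  set L : EuclideanSpace ℝ (Fin N) → ℝ := fun y => ∑ i, sD i (sD i f) y with hLdef
  have hLsm : ∀ (y : EuclideanSpace ℝ (Fin N)), y ≠ 0 → ∀ n : ℕ,
      ContDiffAt ℝ n L y := fun y hy n =>
    ContDiffAt.sum fun i _ => hsD2 i i y hy n
  have hLf : ∀ y, eucLaplacian f y = L y := fun y => rfl
  have hnrm : ∀ (y : EuclideanSpace ℝ (Fin N)), y ≠ 0 → ∀ n : ℕ,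
      ContDiffAt ℝ n (fun z : EuclideanSpace ℝ (Fin N) => ‖z‖) y := fun y hy n =>
    contDiffAt_norm ℝ hy
  have hsDnrm : ∀ (i : Fin N) (y : EuclideanSpace ℝ (Fin N)), y ≠ 0 → ∀ n : ℕ,
      ContDiffAt ℝ n (sD i (fun z : EuclideanSpace ℝ (Fin N) => ‖z‖)) y := fun i y hy n =>
    contDiffAt_sD (hnrm y hy (n+1)) (by norm_cast) i
  -- homogeneity of the partial derivatives
  have hfh : ∀ t : ℝ, 0 < t → ∀ y : EuclideanSpace ℝ (Fin N), y ≠ 0 → ∀ i : Fin N,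
      sD i f (t • y) = t⁻¹ * sD i f y := by
    intro t ht y hy i
    have hty : t • y ≠ 0 := smul_ne_zero (ne_of_gt ht) hy
    have hm : HasFDerivAt (fun z : EuclideanSpace ℝ (Fin N) => t • z)
        (t • ContinuousLinearMap.id ℝ (EuclideanSpace ℝ (Fin N))) y := by
      exact (t • ContinuousLinearMap.id ℝ (EuclideanSpace ℝ (Fin N))).hasFDerivAt
    have hdf : HasFDerivAt f (fderiv ℝ f (t • y)) (t • y) :=
      ((smoothf (t • y) hty 1).differentiableAt one_ne_zero).hasFDerivAt
    have hc : HasFDerivAt (fun z => f (t • z))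
        ((fderiv ℝ f (t • y)).comp (t • ContinuousLinearMap.id ℝ (EuclideanSpace ℝ (Fin N)))) y :=
      hdf.comp y hm
    have heq : (fun z => f (t • z)) =ᶠ[𝓝 y] f := by
      filter_upwards [isOpen_compl_singleton.mem_nhds (by simpa using hy)] with z hz
      exact hhom t ht z (by simpa using hz)
    have h2 : fderiv ℝ f y = (fderiv ℝ f (t • y)).comp
        (t • ContinuousLinearMap.id ℝ (EuclideanSpace ℝ (Fin N))) := by
      rw [← hc.fderiv]; exact (heq.fderiv_eq).symm
    have h3 := congrArg (fun T : EuclideanSpace ℝ (Fin N) →L[ℝ] ℝ =>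
      T (EuclideanSpace.single i 1)) h2
    simp only [ContinuousLinearMap.coe_comp', Function.comp_apply,
      ContinuousLinearMap.smul_apply, ContinuousLinearMap.coe_id', id_eq, _root_.map_smul,
      smul_eq_mul] at h3
    show fderiv ℝ f (t • y) (EuclideanSpace.single i 1) = t⁻¹ * fderiv ℝ f y _
    rw [h3]
    field_simp
  have hEuler : ∀ i : Fin N, fderiv ℝ (sD i f) x x = - sD i f x := fun i =>
    euler_deg_neg_one (fun t ht => hfh t ht x hx i)
      ((hsDf i x hx 1).differentiableAt one_ne_zero)
  -- generic product/add rules for sD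
  have hmul : ∀ (a b : EuclideanSpace ℝ (Fin N) → ℝ) (y : EuclideanSpace ℝ (Fin N)) (i : Fin N),
      DifferentiableAt ℝ a y → DifferentiableAt ℝ b y →
      sD i (fun z => a z * b z) y = a y * sD i b y + b y * sD i a y := by
    intro a b y i ha hb
    show fderiv ℝ _ y _ = _
    rw [fderiv_fun_mul ha hb]
    simp [sD]
  have hadd : ∀ (a b : EuclideanSpace ℝ (Fin N) → ℝ) (y : EuclideanSpace ℝ (Fin N)) (i : Fin N),
      DifferentiableAt ℝ a y → DifferentiableAt ℝ b y →
      sD i (fun z => a z + b z) y = sD i a y + sD i b y := by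
    intro a b y i ha hb
    show fderiv ℝ _ y _ = _
    rw [fderiv_fun_add ha hb]
    rfl
  -- third derivative swap
  have hswap : ∀ i j : Fin N, sD i (sD i (sD j f)) x = sD j (sD i (sD i f)) x := by
    intro i j
    have h1 : sD i (sD j f) =ᶠ[𝓝 x] sD j (sD i f) := by
      filter_upwards [hxmem] with y hy
      exact sD_comm (smoothf y (by simpa using hy) 2) i j
    have h2 : sD i (sD i (sD j f)) x = sD i (sD j (sD i f)) x := by
      show fderiv ℝ _ x _ = fderiv ℝ _ x _
      rw [h1.fderiv_eq]
    rw [h2]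
    exact sD_comm (hsDf i x hx 2) i j
  have hsDL : ∀ j : Fin N, sD j L x = ∑ i, sD j (sD i (sD i f)) x := by
    intro j
    show fderiv ℝ (fun y => ∑ i, sD i (sD i f) y) x _ = _
    rw [fderiv_fun_sum (fun i _ => (hsD2 i i x hx 1).differentiableAt one_ne_zero)]
    simp [ContinuousLinearMap.sum_apply, sD]
  -- key computation A
  have keyA : ∀ j : Fin N, eucLaplacian (fun y => ‖y‖ * sD j f y) x
      = ((N : ℝ) - 1) * ‖x‖⁻¹ * sD j f x - 2 * (‖x‖⁻¹ * sD j f x) + ‖x‖ * sD j L x := by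
    intro j
    set v : EuclideanSpace ℝ (Fin N) → ℝ := sD j f with hv
    have hstep1 : ∀ i : Fin N, sD i (fun z => ‖z‖ * v z)
        =ᶠ[𝓝 x] fun y => sD i (fun z : EuclideanSpace ℝ (Fin N) => ‖z‖) y * v y
          + ‖y‖ * sD i v y := by
      intro i
      filter_upwards [hxmem] with y hy
      have hy' : y ≠ 0 := by simpa using hy
      rw [hmul _ _ y i ((hnrm y hy' 1).differentiableAt one_ne_zero)
        ((hsDf j y hy' 1).differentiableAt one_ne_zero)]
      ring
    have hstep2 : ∀ i : Fin N, sD i (sD i (fun z => ‖z‖ * v z)) x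
        = sD i (sD i (fun z : EuclideanSpace ℝ (Fin N) => ‖z‖)) x * v x
          + 2 * (sD i (fun z : EuclideanSpace ℝ (Fin N) => ‖z‖) x * sD i v x)
          + ‖x‖ * sD i (sD i v) x := by
      intro i
      have h0 : sD i (sD i (fun z => ‖z‖ * v z)) x
          = sD i (fun y => sD i (fun z : EuclideanSpace ℝ (Fin N) => ‖z‖) y * v y
              + ‖y‖ * sD i v y) x := by
        show fderiv ℝ _ x _ = fderiv ℝ _ x _
        rw [(hstep1 i).fderiv_eq]
      have dn1 : DifferentiableAt ℝ (sD i (fun z : EuclideanSpace ℝ (Fin N) => ‖z‖)) x :=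
        (hsDnrm i x hx 1).differentiableAt one_ne_zero
      have dv : DifferentiableAt ℝ v x := (hsDf j x hx 1).differentiableAt one_ne_zero
      have dsv : DifferentiableAt ℝ (sD i v) x := (hsD2 i j x hx 1).differentiableAt one_ne_zero
      have dn : DifferentiableAt ℝ (fun z : EuclideanSpace ℝ (Fin N) => ‖z‖) x :=
        (hnrm x hx 1).differentiableAt one_ne_zero
      rw [h0, hadd _ _ x i (dn1.fun_mul dv) (dn.fun_mul dsv), hmul _ _ x i dn1 dv,
        hmul _ _ x i dn dsv]
      ring
    have hsum1 : ∑ i, sD i (fun z : EuclideanSpace ℝ (Fin N) => ‖z‖) x * sD i v x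
        = ‖x‖⁻¹ * fderiv ℝ v x x := by
      rw [clm_apply_eq_sum (fderiv ℝ v x) x, Finset.mul_sum]
      refine Finset.sum_congr rfl fun i _ => ?_
      rw [sD_norm hx i]
      show _ = ‖x‖⁻¹ * (x i * sD i v x)
      ring
    have hsum2 : ∑ i, sD i (sD i v) x = sD j L x := by
      rw [hsDL j]
      exact Finset.sum_congr rfl fun i _ => hswap i j
    rw [eucLap_eq]
    calc ∑ i, sD i (sD i (fun z => ‖z‖ * v z)) x
        = ∑ i : Fin N, (sD i (sD i (fun z : EuclideanSpace ℝ (Fin N) => ‖z‖)) x * v x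
          + 2 * (sD i (fun z : EuclideanSpace ℝ (Fin N) => ‖z‖) x * sD i v x)
          + ‖x‖ * sD i (sD i v) x) := Finset.sum_congr rfl fun i _ => hstep2 i
      _ = (∑ i, sD i (sD i (fun z : EuclideanSpace ℝ (Fin N) => ‖z‖)) x) * v x
          + 2 * (∑ i, sD i (fun z : EuclideanSpace ℝ (Fin N) => ‖z‖) x * sD i v x)
          + ‖x‖ * ∑ i, sD i (sD i v) x := by
        rw [Finset.sum_add_distrib, Finset.sum_add_distrib, Finset.sum_mul, ← Finset.mul_sum,
          ← Finset.mul_sum]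
      _ = ((N : ℝ) - 1) * ‖x‖⁻¹ * v x - 2 * (‖x‖⁻¹ * v x) + ‖x‖ * sD j L x := by
        rw [lap_norm hx, hsum1, hsum2, hEuler j]
        ring
  -- key computation B
  have hnsq : HasFDerivAt (fun y : EuclideanSpace ℝ (Fin N) => ‖y‖ ^ 2)
      (2 • innerSL ℝ x) x := by
    simpa using (hasFDerivAt_id x).norm_sq
  have keyB : ∀ j : Fin N, sD j (fun y => ‖y‖ ^ 2 * L y) x
      = 2 * x j * L x + ‖x‖ ^ 2 * sD j L x := by
    intro j
    rw [hmul _ _ x j hnsq.differentiableAt ((hLsm x hx 1).differentiableAt one_ne_zero)]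
    have hd : sD j (fun y : EuclideanSpace ℝ (Fin N) => ‖y‖ ^ 2) x = 2 * x j := by
      show fderiv ℝ _ x _ = _
      rw [hnsq.fderiv]
      simp [EuclideanSpace.inner_single_right]
    rw [hd]
    ring
  -- componentwise reduction of the main goal
  have hgrad_smooth : ∀ (y : EuclideanSpace ℝ (Fin N)), y ≠ 0 → ∀ n : ℕ,
      ContDiffAt ℝ n (gradient f) y := by
    intro y hy n
    have h1 : ContDiffAt ℝ n (fderiv ℝ f) y := (smoothf y hy (n+1)).fderiv_right (by norm_cast)
    have h2 := ((InnerProductSpace.toDual ℝ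
      (EuclideanSpace ℝ (Fin N))).symm.toContinuousLinearEquiv.toContinuousLinearMap).contDiff.contDiffAt.comp y h1
    exact h2
  have husm : ∀ (y : EuclideanSpace ℝ (Fin N)), y ≠ 0 → ∀ n : ℕ,
      ContDiffAt ℝ n (fun z : EuclideanSpace ℝ (Fin N) => ‖z‖ • gradient f z) y := fun y hy n =>
    (hnrm y hy n).smul (hgrad_smooth y hy n)
  have hcomp : ∀ j : Fin N, eucLaplacian (fun y => ‖y‖ • gradient f y) x j
      = eucLaplacian (fun y => ‖y‖ * sD j f y) x := by
    intro j
    rw [eucLaplacian_component (u := fun y => ‖y‖ • gradient f y)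
      (by filter_upwards [hxmem] with y hy;
          exact ((husm y (by simpa using hy) 1).differentiableAt one_ne_zero))
      (fun i => ((contDiffAt_DV (husm x hx 2) (by norm_num) _).differentiableAt one_ne_zero)) j]
    congr 1
    funext y
    simp [PiLp.smul_apply, gradient_component, smul_eq_mul]
  -- put everything together, componentwise
  ext j
  simp only [PiLp.sub_apply, PiLp.smul_apply, smul_eq_mul]
  rw [hcomp j, keyA j]
  have hgb : gradient (fun y => ‖y‖ ^ 2 * eucLaplacian f y) x j
      = sD j (fun y => ‖y‖ ^ 2 * L y) x := by
    rw [gradient_component]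
    congr 1
  rw [hgb, keyB j, gradient_component, hLf x]
  field_simp
  ring
end

section
/- Let N ≥ 2 be an integer, let ε ≠ 0 be a real number, and set α_ε = ε(ε + N − 2) and α_1 = N − 1. Define F(α) = ((ε−2)² + α)·(α_ε − α)²/(ε² + α) for α ≥ 0. Then the derivative F′(α) is nonnegative for all α ≥ max{α_1, α_ε}. -/
/-!
With `t = α - ε (ε + N - 2) ≥ 0`, the quotient rule gives
`F'(α) = t · (4 (ε - 1) t + 2 ((ε - 2)² + α)(ε² + α)) / (ε² + α)²`,
so it suffices that the bracket is nonnegative. This is clear for `ε ≥ 1`. For `ε ≤ 1`, once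
expanded, its only term of indefinite sign is `-4ε(ε - 1)(N - 2)`, which is nonnegative for
`0 ≤ ε ≤ 1` and is absorbed by the `α`-terms through `N - 2 ≤ α - 1` for `ε ≤ 0`.
-/

theorem deriv_mul_sq_div_eq (p r c x : ℝ) (hx : r + x ≠ 0) :
    deriv (fun a : ℝ => ((p + a) * (c - a) ^ 2) / (r + a)) x =
      (x - c) * ((x - c) * (r - p) + 2 * (p + x) * (r + x)) / (r + x) ^ 2 := by
  have hnum : HasDerivAt (fun a : ℝ => (p + a) * (c - a) ^ 2)
      (1 * (c - x) ^ 2 + (p + x) * (2 * (c - x) ^ 1 * (-1))) x :=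
    ((hasDerivAt_id x).const_add p).mul (((hasDerivAt_id x).const_sub c).pow 2)
  have hden : HasDerivAt (fun a : ℝ => r + a) 1 x := (hasDerivAt_id x).const_add r
  have hquot : HasDerivAt (fun a : ℝ => ((p + a) * (c - a) ^ 2) / (r + a)) _ x :=
    hnum.div hden hx
  rw [hquot.deriv]
  ring

theorem rellich_bracket_nonneg {N ε α : ℝ} (hN : 2 ≤ N) (h1 : N - 1 ≤ α)
    (h2 : ε * (ε + N - 2) ≤ α) :
    0 ≤ (α - ε * (ε + N - 2)) * (ε ^ 2 - (ε - 2) ^ 2) + 2 * ((ε - 2) ^ 2 + α) * (ε ^ 2 + α) := by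
  have ht : 0 ≤ α - ε * (ε + N - 2) := sub_nonneg.2 h2
  have hα : 0 ≤ α := by linarith
  rcases le_total 1 ε with hε | hε
  · have : 0 ≤ ε ^ 2 - (ε - 2) ^ 2 := by nlinarith
    positivity
  have hexpand : (α - ε * (ε + N - 2)) * (ε ^ 2 - (ε - 2) ^ 2) + 2 * ((ε - 2) ^ 2 + α) * (ε ^ 2 + α)
      = 2 * (α ^ 2 + 2 * α * (ε ^ 2 - ε + 1) + ε ^ 2 * (ε ^ 2 - 6 * ε + 6)
        - 2 * ε * (ε - 1) * (N - 2)) := by ring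
  rw [hexpand]
  rcases le_total 0 ε with hε0 | hε0
  · nlinarith [mul_nonneg (mul_nonneg hε0 (sub_nonneg.2 hε)) (sub_nonneg.2 hN),
      mul_nonneg hα (sq_nonneg (ε - 1)), mul_nonneg (sq_nonneg ε) (sq_nonneg (ε - 3))]
  · nlinarith [mul_nonneg (mul_nonneg (neg_nonneg.2 hε0) (sub_nonneg.2 hε)) (sub_nonneg.2 h1),
      mul_nonneg hα (sq_nonneg ε), mul_nonneg (sq_nonneg ε) (sq_nonneg (ε - 3))]

theorem deriv_rellich_profile_nonneg_general (N : ℕ) (hN : 2 ≤ N) (ε : ℝ) :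
    ∀ α : ℝ, max ((N : ℝ) - 1) (ε * (ε + N - 2)) ≤ α →
      0 ≤ deriv (fun a : ℝ =>
        (((ε - 2) ^ 2 + a) * (ε * (ε + N - 2) - a) ^ 2) / (ε ^ 2 + a)) α := by
  intro α hα
  obtain ⟨h1, h2⟩ := max_le_iff.1 hα
  have hN' : (2 : ℝ) ≤ N := by exact_mod_cast hN
  rw [deriv_mul_sq_div_eq _ _ _ _ (by nlinarith [sq_nonneg ε] : 0 < ε ^ 2 + α).ne']
  exact div_nonneg (mul_nonneg (sub_nonneg.2 h2) (rellich_bracket_nonneg hN' h1 h2))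
    (sq_nonneg _)

theorem deriv_rellich_profile_nonneg (N : ℕ) (hN : 2 ≤ N) (ε : ℝ) (hε : ε ≠ 0) :
    ∀ α : ℝ, max ((N : ℝ) - 1) (ε * (ε + N - 2)) ≤ α →
      0 ≤ deriv (fun a : ℝ =>
        (((ε - 2) ^ 2 + a) * (ε * (ε + N - 2) - a) ^ 2) / (ε ^ 2 + a)) α :=
  deriv_rellich_profile_nonneg_general N hN ε
end

section
/- Let N ≥ 2 be an integer and let ε ≠ 1 be a real number. For κ > 0 and α ≥ 0 define F(κ,α) = (ε−1)² + N − 1 + κ + α − 2α(2ε + N − 2)/(ε² + κ + α), and set α_ν = ν(ν + N − 2) for ν ∈ ℕ∪{0}. Then the infimum of F(κ, α_ν) over all κ > 0 and all ν ∈ ℕ∪{0} equals (ε−1)²·(ε² + 3(N−1))/(ε² + N−1) if (ε−2)² ≤ N + 1, and equals (ε−1)² + N − 1 if (ε−2)² > N + 1. -/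
set_option maxHeartbeats 1000000

theorem hardy_profile_infimum (N : ℕ) (hN : 2 ≤ N) (ε : ℝ) (hε : ε ≠ 1) :
    sInf {y : ℝ | ∃ κ : ℝ, 0 < κ ∧ ∃ ν : ℕ,
        y = (ε - 1) ^ 2 + (N : ℝ) - 1 + κ + (ν : ℝ) * ((ν : ℝ) + N - 2)
          - 2 * ((ν : ℝ) * ((ν : ℝ) + N - 2)) * (2 * ε + N - 2) /
            (ε ^ 2 + κ + (ν : ℝ) * ((ν : ℝ) + N - 2))} =
      if (ε - 2) ^ 2 ≤ (N : ℝ) + 1 then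
        (ε - 1) ^ 2 * (ε ^ 2 + 3 * ((N : ℝ) - 1)) / (ε ^ 2 + (N : ℝ) - 1)
      else (ε - 1) ^ 2 + (N : ℝ) - 1 := by
  have hN2 : (2:ℝ) ≤ (N:ℝ) := by exact_mod_cast hN
  have hd : (0:ℝ) < ε ^ 2 + (N:ℝ) - 1 := by nlinarith [sq_nonneg ε]
  have hdisj : ∀ ν : ℕ, (ν:ℝ) * ((ν:ℝ) + N - 2) = 0 ∨
      (ν:ℝ) * ((ν:ℝ) + N - 2) = (N:ℝ) - 1 ∨
      2 * (N:ℝ) ≤ (ν:ℝ) * ((ν:ℝ) + N - 2) := by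
    intro ν
    match ν with
    | 0 => left; push_cast; ring
    | 1 => right; left; push_cast; ring
    | (n+2) =>
      right; right; push_cast
      nlinarith [(Nat.cast_nonneg n : (0:ℝ) ≤ (n:ℝ))]
  by_cases hcase : (ε - 2) ^ 2 ≤ (N : ℝ) + 1
  · rw [if_pos hcase]
    have hε2 : (0:ℝ) < 2 * ε + (N:ℝ) - 2 := by nlinarith [sq_nonneg ε]
    have hM : (ε - 1) ^ 2 * (ε ^ 2 + 3 * ((N : ℝ) - 1)) / (ε ^ 2 + (N : ℝ) - 1)
        ≤ (ε - 1) ^ 2 + (N:ℝ) - 1 := by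
      rw [div_le_iff₀ hd]
      nlinarith [mul_nonneg (by linarith : (0:ℝ) ≤ (N:ℝ) - 1)
        (by nlinarith : (0:ℝ) ≤ (N:ℝ) + 1 - (ε - 2) ^ 2)]
    apply csInf_eq_of_forall_ge_of_forall_gt_exists_lt
    · exact ⟨_, 1, one_pos, 0, rfl⟩
    · rintro y ⟨κ, hκ, ν, rfl⟩
      set v : ℝ := (ν:ℝ) * ((ν:ℝ) + N - 2) with hv
      have hv0 : 0 ≤ v := by
        rcases hdisj ν with h | h | h <;> rw [hv] <;> linarith
      have hs : (0:ℝ) < ε ^ 2 + κ + v := by nlinarith [sq_nonneg ε]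
      have key : ∀ u : ℝ, (N:ℝ) - 1 ≤ u →
          0 ≤ (u - ((N:ℝ) - 1)) * (ε ^ 2 * (u - ((N:ℝ) - 1) - 2 + (ε - 2) ^ 2)
            + ((N:ℝ) - 1) * u) →
          (ε - 1) ^ 2 * (ε ^ 2 + 3 * ((N : ℝ) - 1)) / (ε ^ 2 + (N : ℝ) - 1)
            ≤ (ε - 1) ^ 2 + (N:ℝ) - 1 + κ + u
              - 2 * u * (2 * ε + N - 2) / (ε ^ 2 + κ + u) := by
        intro u hu hfac
        have hdu : (0:ℝ) < ε ^ 2 + u := by nlinarith [sq_nonneg ε]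
        have hsu : (0:ℝ) < ε ^ 2 + κ + u := by linarith
        have h1 : 2 * u * (2 * ε + (N:ℝ) - 2) / (ε ^ 2 + κ + u)
            ≤ 2 * u * (2 * ε + (N:ℝ) - 2) / (ε ^ 2 + u) :=
          div_le_div_of_nonneg_left
            (by nlinarith : (0:ℝ) ≤ 2 * u * (2 * ε + (N:ℝ) - 2)) hdu (by linarith)
        have h2 : (ε - 1) ^ 2 * (ε ^ 2 + 3 * ((N : ℝ) - 1)) / (ε ^ 2 + (N : ℝ) - 1)
            ≤ (ε - 1) ^ 2 + (N:ℝ) - 1 + u - 2 * u * (2 * ε + (N:ℝ) - 2) / (ε ^ 2 + u) := by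
          have hrw : (ε - 1) ^ 2 + (N:ℝ) - 1 + u - 2 * u * (2 * ε + (N:ℝ) - 2) / (ε ^ 2 + u)
              = (((ε - 1) ^ 2 + (N:ℝ) - 1 + u) * (ε ^ 2 + u)
                  - 2 * u * (2 * ε + (N:ℝ) - 2)) / (ε ^ 2 + u) := by
            field_simp
          rw [hrw, div_le_div_iff₀ hd hdu]
          nlinarith [hfac]
        linarith
      rcases hdisj ν with h | h | h
      · rw [← hv] at h
        rw [h]
        norm_num
        linarith [hM]
      · rw [← hv] at h
        have hfac : 0 ≤ (v - ((N:ℝ) - 1)) * (ε ^ 2 * (v - ((N:ℝ) - 1) - 2 + (ε - 2) ^ 2)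
            + ((N:ℝ) - 1) * v) := by
          rw [h]
          simp
        exact key v (by linarith) hfac
      · rw [← hv] at h
        have hfac : 0 ≤ (v - ((N:ℝ) - 1)) * (ε ^ 2 * (v - ((N:ℝ) - 1) - 2 + (ε - 2) ^ 2)
            + ((N:ℝ) - 1) * v) := by
          apply mul_nonneg (by linarith)
          have h9 : (0:ℝ) ≤ v - ((N:ℝ) - 1) - 2 + (ε - 2) ^ 2 := by
            nlinarith [sq_nonneg (ε - 2)]
          nlinarith [mul_nonneg (sq_nonneg ε) h9, mul_nonneg (by linarith : (0:ℝ) ≤ (N:ℝ) - 1) hv0]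
        exact key v (by linarith) hfac
    · intro w hw
      set M : ℝ := (ε - 1) ^ 2 * (ε ^ 2 + 3 * ((N : ℝ) - 1)) / (ε ^ 2 + (N : ℝ) - 1) with hMdef
      set E : ℝ := (ε ^ 2 + (N:ℝ) - 1) * (ε ^ 2 + 1 + (N:ℝ) - 1)
        + 2 * ((N:ℝ) - 1) * (2 * ε + (N:ℝ) - 2) with hE
      have hEpos : 0 < E := by
        have : (0:ℝ) ≤ 2 * ((N:ℝ) - 1) * (2 * ε + (N:ℝ) - 2) := by nlinarith
        nlinarith [hd]
      set κ₀ : ℝ := min 1 ((w - M) * (ε ^ 2 + (N:ℝ) - 1) ^ 2 / (2 * E)) with hκ₀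
      have hκpos : 0 < κ₀ := by
        apply lt_min one_pos
        apply div_pos (mul_pos (by linarith) (by positivity)) (by linarith)
      have hκ1 : κ₀ ≤ 1 := min_le_left _ _
      have hκ2 : κ₀ ≤ (w - M) * (ε ^ 2 + (N:ℝ) - 1) ^ 2 / (2 * E) := min_le_right _ _
      clear_value M E κ₀
      refine ⟨_, ⟨κ₀, hκpos, 1, rfl⟩, ?_⟩
      push_cast
      have hs1 : (0:ℝ) < ε ^ 2 + κ₀ + 1 * (1 + (N:ℝ) - 2) := by nlinarith [sq_nonneg ε]
      have hid : (ε - 1) ^ 2 + (N : ℝ) - 1 + κ₀ + 1 * (1 + (N:ℝ) - 2)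
          - 2 * (1 * (1 + (N:ℝ) - 2)) * (2 * ε + (N:ℝ) - 2) / (ε ^ 2 + κ₀ + 1 * (1 + (N:ℝ) - 2))
          = M + κ₀ * ((ε ^ 2 + (N:ℝ) - 1) * (ε ^ 2 + κ₀ + (N:ℝ) - 1)
              + 2 * ((N:ℝ) - 1) * (2 * ε + (N:ℝ) - 2))
            / ((ε ^ 2 + (N:ℝ) - 1) * (ε ^ 2 + κ₀ + (N:ℝ) - 1)) := by
        have h2 : ε ^ 2 + (N:ℝ) - 1 ≠ 0 := ne_of_gt hd
        have h3 : ε ^ 2 + κ₀ + (N:ℝ) - 1 ≠ 0 := by intro hc; nlinarith [hs1]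
        rw [hMdef, show ε ^ 2 + κ₀ + 1 * (1 + (N:ℝ) - 2) = ε ^ 2 + κ₀ + (N:ℝ) - 1 by ring,
            show (1:ℝ) * (1 + (N:ℝ) - 2) = (N:ℝ) - 1 by ring]
        rw [div_add_div _ _ h2 (mul_ne_zero h2 h3),
            eq_div_iff (mul_ne_zero h2 (mul_ne_zero h2 h3))]
        field_simp
        ring
      rw [hid]
      have hbound : κ₀ * ((ε ^ 2 + (N:ℝ) - 1) * (ε ^ 2 + κ₀ + (N:ℝ) - 1)
            + 2 * ((N:ℝ) - 1) * (2 * ε + (N:ℝ) - 2))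
          / ((ε ^ 2 + (N:ℝ) - 1) * (ε ^ 2 + κ₀ + (N:ℝ) - 1))
          ≤ κ₀ * E / (ε ^ 2 + (N:ℝ) - 1) ^ 2 := by
        apply div_le_div₀ (by positivity)
        · apply mul_le_mul_of_nonneg_left _ hκpos.le
          rw [hE]
          nlinarith [hd]
        · positivity
        · nlinarith [hd, hκpos]
      have hb2 : κ₀ * E / (ε ^ 2 + (N:ℝ) - 1) ^ 2 ≤ (w - M) / 2 := by
        rw [div_le_div_iff₀ (by positivity) (by norm_num)]
        have h1 := hκ2
        rw [le_div_iff₀ (by linarith : (0:ℝ) < 2 * E)] at h1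
        linarith [h1]
      linarith
  · rw [if_neg hcase]
    have hcase' : (N:ℝ) + 1 < (ε - 2) ^ 2 := not_le.mp hcase
    apply csInf_eq_of_forall_ge_of_forall_gt_exists_lt
    · exact ⟨_, 1, one_pos, 0, rfl⟩
    · rintro y ⟨κ, hκ, ν, rfl⟩
      set v : ℝ := (ν:ℝ) * ((ν:ℝ) + N - 2) with hv
      have hv0 : 0 ≤ v := by
        rcases hdisj ν with h | h | h <;> rw [hv] <;> linarith
      have hs : (0:ℝ) < ε ^ 2 + κ + v := by nlinarith [sq_nonneg ε]
      have hkey : 2 * v * (2 * ε + (N:ℝ) - 2) / (ε ^ 2 + κ + v) ≤ κ + v := by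
        rw [div_le_iff₀ hs]
        have hdisj2 : v = 0 ∨ (N:ℝ) - 1 ≤ v := by
          rcases hdisj ν with h | h | h
          · left; rw [hv]; exact h
          · rw [← hv] at h; right; linarith
          · rw [← hv] at h; right; linarith
        rcases hdisj2 with h0 | h1
        · rw [h0]
          nlinarith [sq_nonneg ε]
        · have hkey2 : (0:ℝ) ≤ ε ^ 2 + v - (4 * ε + 2 * (N:ℝ) - 4) := by
            nlinarith
          nlinarith [mul_nonneg hv0 hkey2, mul_pos hκ hs, mul_nonneg hκ.le hv0,
            sq_nonneg ε, mul_nonneg hκ.le (sq_nonneg ε)]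
      linarith
    · intro w hw
      refine ⟨_, ⟨(w - ((ε - 1) ^ 2 + (N:ℝ) - 1)) / 2, by linarith, 0, rfl⟩, ?_⟩
      push_cast
      norm_num
      linarith
end

section
/- Let N ≥ 2 be an integer and let ε > 1 be a real number. Then for all κ > 0 and α ≥ 0, 2κ − 4α(ε−1)(N + 2ε − 2)²/(κ + ε² + α)² + N²/2 + 2(ε + (N−4)/2)² + 2α ≥ 0. (This is the statement that the Rellich quotient function F(κ,α) = κ² + 4α(1−ε)(N+2ε−2)²κ/((ε²+α)(κ+ε²+α)) + (N²/2 + 2(ε+(N−4)/2)² + 2α)κ + ((ε−2)²+α)(ε(ε+N−2)−α)²/(ε²+α) is nondecreasing in κ > 0 for each fixed α ≥ 0.) -/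
theorem rellich_profile_monotone_in_kappa (N : ℕ) (hN : 2 ≤ N) (ε : ℝ) (hε : 1 < ε) :
    ∀ κ : ℝ, 0 < κ → ∀ α : ℝ, 0 ≤ α →
      0 ≤ 2 * κ - 4 * α * (ε - 1) * ((N : ℝ) + 2 * ε - 2) ^ 2 / (κ + ε ^ 2 + α) ^ 2
          + (N : ℝ) ^ 2 / 2 + 2 * (ε + ((N : ℝ) - 4) / 2) ^ 2 + 2 * α := by
  have hN' : (2:ℝ) ≤ (N:ℝ) := by exact_mod_cast hN
  intro κ hκ α hα
  have hε2 : (0:ℝ) < ε ^ 2 := by positivity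
  have hc : (0:ℝ) < (κ + ε ^ 2 + α) ^ 2 := by positivity
  have key : 4 * α * ε ^ 2 ≤ (κ + ε ^ 2 + α) ^ 2 := by
    nlinarith [sq_nonneg (ε ^ 2 - α), sq_nonneg κ,
      mul_pos hκ (show (0:ℝ) < ε ^ 2 + α by positivity)]
  have hM : (0:ℝ) ≤ ((N:ℝ) + 2 * ε - 2) ^ 2 := sq_nonneg _
  have hε1 : (0:ℝ) ≤ ε - 1 := by linarith
  have h1 : 4 * α * (ε - 1) * ((N : ℝ) + 2 * ε - 2) ^ 2 / (κ + ε ^ 2 + α) ^ 2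
      ≤ (ε - 1) * ((N : ℝ) + 2 * ε - 2) ^ 2 / ε ^ 2 := by
    rw [div_le_div_iff₀ hc hε2]
    nlinarith [mul_le_mul_of_nonneg_left key (mul_nonneg hε1 hM)]
  have h2 : (ε - 1) * ((N : ℝ) + 2 * ε - 2) ^ 2 / ε ^ 2
      ≤ (N : ℝ) ^ 2 / 2 + 2 * (ε + ((N : ℝ) - 4) / 2) ^ 2 := by
    rw [div_le_iff₀ hε2]
    nlinarith [sq_nonneg (ε - 2), sq_nonneg ((N:ℝ) + 2 * ε - 6), hN',
      mul_nonneg hε1 (sq_nonneg ((N:ℝ) + 2 * ε - 6)),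
      mul_nonneg (sq_nonneg (ε - 2)) (sq_nonneg ((N:ℝ) + 2 * ε - 6)),
      mul_nonneg (sq_nonneg (ε - 2)) (mul_nonneg (by linarith : (0:ℝ) ≤ (N:ℝ) - 2) (by linarith : (0:ℝ) ≤ (N:ℝ) + 2)),
      mul_nonneg hε1 (mul_nonneg (by linarith : (0:ℝ) ≤ (N:ℝ) - 2) (by linarith : (0:ℝ) ≤ (N:ℝ) + 2))]
  linarith [hκ.le, hα]
end
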